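/- arXiv:2409.20180 — 2 statements merged into one kernel-verified Lean document; each statement's English description precedes it below -/
import Mathlib

section
/- Fix integers m ≥ 1 and 3 ≤ k ≤ n, and let β_r be the coefficient of x^r in P(x) = ∏_{i=0}^{k-1} (1 - i/n + x)^{m+1}. Then for every integer r with k-1 ≤ r ≤ k(m+1) - 1: β_{r+1} · S(r+1, k-1) ≤ ((m+1)(r+1)²/2) · (1 - (k-1)/n)^{-k(m+1)} · β_r · S(r, k-1), where S denotes the Stirling number of the second kind. -/
/-!
Put `c = 1 - (k-1)/n`; every factor `X + a` of `P` has `a ≥ c > 0`. Multiplying in such factors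
one at a time shows that the coefficients of a product of `t` of them satisfy
`(s+1) c β_{s+1} ≤ (t - s) β_s`; at `s = r` this bounds `β_{r+1}/β_r` by `k(m+1)/((r+1)c)`.
The Stirling recurrence gives `S(r+1, k-1) ≤ k(k-1)/2 · S(r, k-1)`, and `k ≤ r + 1`,
`c⁻¹ ≤ c^{-k(m+1)}` absorb the rest.
-/
/-- Stirling numbers of the second kind: `stirling2 n k` is the number of partitions of an
`n`-element set into `k` nonempty blocks, via the standard recurrence
`S(n+1, k+1) = (k+1) S(n, k+1) + S(n, k)`. -/
def stirling2 : ℕ → ℕ → ℕ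
  | 0, 0 => 1
  | 0, _ + 1 => 0
  | _ + 1, 0 => 0
  | n + 1, k + 1 => (k + 1) * stirling2 n (k + 1) + stirling2 n k

open Polynomial

lemma stirling2_succ_succ (n k : ℕ) :
    stirling2 (n + 1) (k + 1) = (k + 1) * stirling2 n (k + 1) + stirling2 n k := rfl

lemma stirling2_eq_zero_of_lt : ∀ {n k : ℕ}, n < k → stirling2 n k = 0
  | 0, _ + 1, _ => rfl
  | n + 1, k + 1, h => by
    rw [stirling2_succ_succ, stirling2_eq_zero_of_lt (by omega),
      stirling2_eq_zero_of_lt (by omega), mul_zero]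

lemma stirling2_self : ∀ n : ℕ, stirling2 n n = 1
  | 0 => rfl
  | n + 1 => by
    rw [stirling2_succ_succ, stirling2_eq_zero_of_lt (by omega), stirling2_self n, mul_zero]

lemma two_mul_stirling2_succ_self : ∀ n : ℕ, 2 * stirling2 (n + 1) n = n * (n + 1)
  | 0 => rfl
  | n + 1 => by
    rw [stirling2_succ_succ, stirling2_self]
    linarith [two_mul_stirling2_succ_self n]

lemma two_mul_stirling2_le_mul_stirling2_succ :
    ∀ {r j : ℕ}, j + 1 ≤ r → 2 * stirling2 r j ≤ j * (j + 1) * stirling2 r (j + 1)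
  | r + 1, 0, _ => by simp [stirling2]
  | r + 1, j + 1, h => by
    rcases Nat.lt_or_ge (j + 1) r with hlt | hge
    · have ih₁ := two_mul_stirling2_le_mul_stirling2_succ (r := r) (j := j + 1) hlt
      have ih₀ := two_mul_stirling2_le_mul_stirling2_succ (r := r) (j := j) (by omega)
      rw [stirling2_succ_succ, stirling2_succ_succ]
      nlinarith
    · obtain rfl : r = j + 1 := by omega
      rw [stirling2_self]
      linarith [two_mul_stirling2_succ_self (j + 1)]

lemma two_mul_stirling2_succ_le {r k : ℕ} (hkr : k ≤ r) :
    2 * stirling2 (r + 1) k ≤ k * (k + 1) * stirling2 r k := by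
  cases k with
  | zero => simp [stirling2]
  | succ j =>
    rw [stirling2_succ_succ]
    nlinarith [two_mul_stirling2_le_mul_stirling2_succ hkr]

/-- For `P = ∏ (X + a_i)` of degree `t` with all `a_i ≥ c ≥ 0` this is the coefficientwise
form of `(X + c) P' ≤ t P`. -/
structure CoeffRatioBound (c : ℝ) (t : ℕ) (P : ℝ[X]) : Prop where
  coeff_nonneg : ∀ s, 0 ≤ P.coeff s
  succ_mul_coeff_succ_le : ∀ s : ℕ, ((s : ℝ) + 1) * c * P.coeff (s + 1) ≤ (t - s) * P.coeff s

namespace CoeffRatioBound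

variable {c : ℝ} {t : ℕ} {P : ℝ[X]}

lemma one (c : ℝ) : CoeffRatioBound c 0 (1 : ℝ[X]) where
  coeff_nonneg s := by rw [coeff_one]; split <;> norm_num
  succ_mul_coeff_succ_le s := by cases s <;> simp [coeff_one]

lemma linear_mul (h : CoeffRatioBound c t P) {a : ℝ} (ha : 0 ≤ a) (hca : c ≤ a) :
    CoeffRatioBound c (t + 1) ((C a + X) * P) := by
  obtain ⟨h₀, h₁⟩ := h
  have coeff_zero : ((C a + X) * P).coeff 0 = a * P.coeff 0 := by
    rw [add_mul, coeff_add, coeff_C_mul, coeff_X_mul_zero, add_zero]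
  have coeff_succ (s : ℕ) : ((C a + X) * P).coeff (s + 1) = a * P.coeff (s + 1) + P.coeff s := by
    rw [add_mul, coeff_add, coeff_C_mul, coeff_X_mul]
  refine ⟨fun s => ?_, fun s => ?_⟩
  · cases s with
    | zero => rw [coeff_zero]; exact mul_nonneg ha (h₀ 0)
    | succ s => rw [coeff_succ]; exact add_nonneg (mul_nonneg ha (h₀ _)) (h₀ _)
  · cases s with
    | zero =>
      rw [coeff_succ, coeff_zero]
      have := h₁ 0
      push_cast at this ⊢
      nlinarith [h₀ 0, h₀ 1]
    | succ s =>
      rw [coeff_succ, coeff_succ]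
      -- `a` times the bound at `s + 1` plus the bound at `s`; `c ≤ a` absorbs the extra `c P_{s+1}`
      have hA := mul_le_mul_of_nonneg_left (h₁ (s + 1)) ha
      have hB := h₁ s
      have hC : c * P.coeff (s + 1) ≤ a * P.coeff (s + 1) := mul_le_mul_of_nonneg_right hca (h₀ _)
      push_cast at hA hB ⊢
      nlinarith

lemma linear_pow_mul (h : CoeffRatioBound c t P) {a : ℝ} (ha : 0 ≤ a) (hca : c ≤ a) (M : ℕ) :
    CoeffRatioBound c (M + t) ((C a + X) ^ M * P) := by
  induction M with
  | zero => simpa using h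
  | succ M ih =>
    rw [pow_succ', mul_assoc, Nat.succ_add]
    exact ih.linear_mul ha hca

lemma prod_linear_pow {ι : Type*} (s : Finset ι) {a : ι → ℝ} (hc : 0 ≤ c)
    (ha : ∀ i ∈ s, c ≤ a i) (M : ℕ) :
    CoeffRatioBound c (s.card * M) (∏ i ∈ s, (C (a i) + X) ^ M) := by
  induction s using Finset.cons_induction with
  | empty => simpa using one c
  | cons i s hi ih =>
    rw [Finset.prod_cons, Finset.card_cons, Nat.succ_mul, add_comm]
    have hai := ha i (Finset.mem_cons_self i s)
    exact (ih fun j hj => ha j (Finset.mem_cons_of_mem hj)).linear_pow_mul (hc.trans hai) hai M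

lemma succ_mul_coeff_succ_le_mul (h : CoeffRatioBound c t P) (s : ℕ) :
    ((s : ℝ) + 1) * c * P.coeff (s + 1) ≤ t * P.coeff s := by
  nlinarith [h.succ_mul_coeff_succ_le s, h.coeff_nonneg s, (Nat.cast_nonneg s : (0 : ℝ) ≤ s)]

end CoeffRatioBound

lemma coeff_succ_mul_stirling2_le {c : ℝ} {k m r : ℕ} {P : ℝ[X]}
    (hP : CoeffRatioBound c (k * (m + 1)) P) (hc : 0 < c) (hk : 1 ≤ k) (hr : k - 1 ≤ r) :
    P.coeff (r + 1) * stirling2 (r + 1) (k - 1) ≤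
      (m + 1) * (r + 1) ^ 2 / 2 * c⁻¹ * P.coeff r * stirling2 r (k - 1) := by
  have hβ : ((r : ℝ) + 1) * c * P.coeff (r + 1) ≤ k * (m + 1) * P.coeff r := by
    exact_mod_cast hP.succ_mul_coeff_succ_le_mul r
  have hS : 2 * (stirling2 (r + 1) (k - 1) : ℝ) ≤ (k - 1) * k * stirling2 r (k - 1) := by
    have := two_mul_stirling2_succ_le (k := k - 1) hr
    rw [Nat.sub_add_cancel hk] at this
    exact_mod_cast this
  have hkr : (k : ℝ) ≤ r + 1 := by exact_mod_cast (show k ≤ r + 1 by omega)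
  have hk' : (1 : ℝ) ≤ k := by exact_mod_cast hk
  have hk₃ : (k : ℝ) ^ 2 * (k - 1) / (r + 1) ≤ (r + 1) ^ 2 := by
    rw [div_le_iff₀ (by positivity)]
    nlinarith [pow_le_pow_left₀ (by linarith) hkr 3]
  have hβ₀ := hP.coeff_nonneg r
  calc P.coeff (r + 1) * stirling2 (r + 1) (k - 1)
      ≤ (k * (m + 1) * P.coeff r / ((r + 1) * c)) * ((k - 1) * k * stirling2 r (k - 1) / 2) := by
        refine mul_le_mul ?_ ?_ (by positivity) (by positivity)
        · rw [le_div_iff₀ (by positivity)]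
          linarith
        · linarith
    _ = (m + 1) * ((k : ℝ) ^ 2 * (k - 1) / (r + 1)) / 2 * c⁻¹ * P.coeff r *
          stirling2 r (k - 1) := by
        field_simp
    _ ≤ (m + 1) * (r + 1) ^ 2 / 2 * c⁻¹ * P.coeff r * stirling2 r (k - 1) := by
        gcongr

theorem stmt9_general (m k n : ℕ) (hk : 3 ≤ k) (hkn : k ≤ n) :
    ∀ r : ℕ, k - 1 ≤ r → r ≤ k * (m + 1) - 1 →
      (∏ i ∈ Finset.range k,
            (Polynomial.C (1 - (i : ℝ) / n) + Polynomial.X) ^ (m + 1)).coeff (r + 1) *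
          (stirling2 (r + 1) (k - 1) : ℝ) ≤
        ((m + 1 : ℝ) * (r + 1 : ℝ) ^ 2 / 2) *
          (1 - ((k : ℝ) - 1) / n) ^ (-(k * (m + 1) : ℤ)) *
          (∏ i ∈ Finset.range k,
            (Polynomial.C (1 - (i : ℝ) / n) + Polynomial.X) ^ (m + 1)).coeff r *
          (stirling2 r (k - 1) : ℝ) := by
  intro r hr _
  set c : ℝ := 1 - ((k : ℝ) - 1) / n
  have hn : (0 : ℝ) < n := by exact_mod_cast (show 0 < n by omega)
  have hk₁ : 1 ≤ k := by omega
  have hk' : (1 : ℝ) ≤ k := by exact_mod_cast hk₁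
  have hkn' : (k : ℝ) ≤ n := by exact_mod_cast hkn
  have hc : 0 < c := by
    rw [sub_pos, div_lt_one hn]
    linarith
  have hc₁ : c ≤ 1 := sub_le_self _ (div_nonneg (by linarith) hn.le)
  have hroots : ∀ i ∈ Finset.range k, c ≤ 1 - (i : ℝ) / n := by
    intro i hi
    have : (i : ℝ) + 1 ≤ k := by exact_mod_cast Finset.mem_range.mp hi
    exact sub_le_sub_left (div_le_div_of_nonneg_right (by linarith) hn.le) 1
  have hP := CoeffRatioBound.prod_linear_pow _ hc.le hroots (m + 1)
  rw [Finset.card_range] at hP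
  have hcD : c⁻¹ ≤ c ^ (-(k * (m + 1) : ℤ)) := by
    rw [← zpow_neg_one]
    exact zpow_le_zpow_right_of_le_one₀ hc hc₁ (by nlinarith)
  refine (coeff_succ_mul_stirling2_le hP hc hk₁ hr).trans ?_
  have := hP.coeff_nonneg r
  gcongr

theorem stmt9 (m k n : ℕ) (hm : 1 ≤ m) (hk : 3 ≤ k) (hkn : k ≤ n) :
    ∀ r : ℕ, k - 1 ≤ r → r ≤ k * (m + 1) - 1 →
      (∏ i ∈ Finset.range k,
            (Polynomial.C (1 - (i : ℝ) / n) + Polynomial.X) ^ (m + 1)).coeff (r + 1) *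
          (stirling2 (r + 1) (k - 1) : ℝ) ≤
        ((m + 1 : ℝ) * (r + 1 : ℝ) ^ 2 / 2) *
          (1 - ((k : ℝ) - 1) / n) ^ (-(k * (m + 1) : ℤ)) *
          (∏ i ∈ Finset.range k,
            (Polynomial.C (1 - (i : ℝ) / n) + Polynomial.X) ^ (m + 1)).coeff r *
          (stirling2 r (k - 1) : ℝ) :=
  stmt9_general m k n hk hkn
end

section
/- Fix an integer m ≥ 1 and a real w > 0, and set k_n = ⌈w log n⌉. For each n ≥ 2 let β_r^{(n)} be the coefficient of x^r in P(x) = ∏_{i=0}^{k_n-1} (1 - i/n + x)^{m+1}, and let S denote the Stirling number of the second kind. Then lim_{n→∞} [∑_{r=k_n-1}^{k_n(m+1)} n^{-r} β_r^{(n)} S(r, k_n-1)] / [n^{-(k_n-1)} β_{k_n-1}^{(n)}] = 1; that is, the sum is asymptotically equal to its first term. -/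
/-!
Write `K = k - 1` and `N = k (m + 1) = deg P`. By Vieta, `β_r` is an elementary symmetric function
of `N` numbers `1 - i/n ∈ [1 - K/n, 1]`, so `β_r ≤ C(N, r)`, and Bernoulli's inequality gives
`C(N, K) ≤ 2 β_K` as soon as `q = N K / n ≤ 1/2`. Together with `S(r, K) ≤ C(r, K) K^(r - K)` and
`C(N, r) C(r, K) = C(N, K) C(N - K, r - K)`, the `r`-th term is at most twice the first one times
`q^(r - K)`. Summing the geometric series puts the ratio in `[1, 1 + 4q]`, and
`q = O(log² n / n) → 0`.
-/

open Filter

open Polynomial Finset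

theorem stirling2_eq_stirlingSecond : stirling2 = Nat.stirlingSecond := by
  funext n k
  induction n generalizing k with
  | zero => cases k <;> rfl
  | succ n ih =>
    cases k with
    | zero => rfl
    | succ k => simp only [stirling2, Nat.stirlingSecond_succ_succ, ih]

namespace Nat

theorem stirlingSecond_le_choose_mul_pow (n k : ℕ) :
    stirlingSecond n k ≤ n.choose k * k ^ (n - k) := by
  induction n generalizing k with
  | zero => cases k <;> simp
  | succ n ih =>
    cases k with
    | zero => simp
    | succ k =>
      have h₁ : (k + 1) * stirlingSecond n (k + 1) ≤ n.choose (k + 1) * (k + 1) ^ (n - k) := by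
        rcases le_or_gt (k + 1) n with hkn | hnk
        · calc (k + 1) * stirlingSecond n (k + 1)
              ≤ (k + 1) * (n.choose (k + 1) * (k + 1) ^ (n - (k + 1))) :=
                Nat.mul_le_mul_left _ (ih _)
            _ = n.choose (k + 1) * (k + 1) ^ (n - k) := by
                rw [show n - k = n - (k + 1) + 1 by omega, pow_succ]; ring
        · simp [stirlingSecond_eq_zero_of_lt hnk]
      have h₂ : stirlingSecond n k ≤ n.choose k * (k + 1) ^ (n - k) :=
        (ih k).trans (Nat.mul_le_mul_left _ (Nat.pow_le_pow_left k.le_succ _))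
      rw [stirlingSecond_succ_succ, choose_succ_succ', Nat.add_sub_add_right]
      linarith

theorem choose_mul_stirlingSecond_le {N K r : ℕ} (hKr : K ≤ r) :
    N.choose r * stirlingSecond r K ≤ N.choose K * (N * K) ^ (r - K) :=
  calc N.choose r * stirlingSecond r K ≤ N.choose r * (r.choose K * K ^ (r - K)) :=
        Nat.mul_le_mul_left _ (stirlingSecond_le_choose_mul_pow r K)
    _ = N.choose K * (N - K).choose (r - K) * K ^ (r - K) := by
        rw [← mul_assoc, Nat.choose_mul hKr]
    _ ≤ N.choose K * N ^ (r - K) * K ^ (r - K) := by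
        gcongr
        exact (choose_le_pow _ _).trans (Nat.pow_le_pow_left (Nat.sub_le _ _) _)
    _ = N.choose K * (N * K) ^ (r - K) := by rw [mul_pow, mul_assoc]

end Nat

section Vieta

variable {σ R : Type*} [CommSemiring R] (s : Finset σ) (a : σ → R)

theorem Finset.prod_C_add_X_pow_eq_prod_product (M : ℕ) :
    ∏ i ∈ s, (C (a i) + X) ^ M = ∏ p ∈ s ×ˢ range M, (X + C (a p.1)) := by
  simp [prod_product, add_comm]

variable [PartialOrder R] [IsOrderedRing R] {k : ℕ}

theorem Finset.choose_mul_pow_le_coeff_prod_X_add_C {c : R} (hc : 0 ≤ c)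
    (ha : ∀ i ∈ s, c ≤ a i) (hk : k ≤ #s) :
    ((#s).choose k : R) * c ^ (#s - k) ≤ (∏ i ∈ s, (X + C (a i))).coeff k := by
  rw [prod_X_add_C_coeff s a hk, ← Nat.choose_symm hk, ← card_powersetCard, ← nsmul_eq_mul]
  refine card_nsmul_le_sum _ _ _ fun t ht => ?_
  rw [mem_powersetCard] at ht
  calc c ^ (#s - k) = ∏ _ ∈ t, c := by rw [prod_const, ht.2]
    _ ≤ ∏ i ∈ t, a i := prod_le_prod (fun _ _ => hc) fun i hi => ha i (ht.1 hi)

theorem Finset.coeff_prod_X_add_C_le_choose_mul_pow {d : R} (ha₀ : ∀ i ∈ s, 0 ≤ a i)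
    (ha : ∀ i ∈ s, a i ≤ d) (hk : k ≤ #s) :
    (∏ i ∈ s, (X + C (a i))).coeff k ≤ ((#s).choose k : R) * d ^ (#s - k) := by
  rw [prod_X_add_C_coeff s a hk, ← Nat.choose_symm hk, ← card_powersetCard, ← nsmul_eq_mul]
  refine sum_le_card_nsmul _ _ _ fun t ht => ?_
  rw [mem_powersetCard] at ht
  calc ∏ i ∈ t, a i ≤ ∏ _ ∈ t, d :=
        prod_le_prod (fun i hi => ha₀ i (ht.1 hi)) fun i hi => ha i (ht.1 hi)
    _ = d ^ (#s - k) := by rw [prod_const, ht.2]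

end Vieta

theorem sum_Ioc_pow_sub_le_two_mul {𝕜 : Type*} [Field 𝕜] [LinearOrder 𝕜] [IsStrictOrderedRing 𝕜]
    {q : 𝕜} (hq₀ : 0 ≤ q) (hq : q ≤ 1 / 2) (a b : ℕ) :
    ∑ r ∈ Ioc a b, q ^ (r - a) ≤ 2 * q := by
  rw [← Ico_add_one_add_one_eq_Ioc, sum_Ico_eq_sum_range]
  simp only [show ∀ j, a + 1 + j - a = j + 1 by omega, pow_succ, ← sum_mul]
  have hgeom := geom_sum_Ico_le_of_lt_one (m := 0) (n := b + 1 - (a + 1)) hq₀ (by linarith)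
  rw [← range_eq_Ico, pow_zero] at hgeom
  calc (∑ j ∈ range (b + 1 - (a + 1)), q ^ j) * q ≤ 1 / (1 - q) * q := by gcongr
    _ ≤ 2 * q := by
        gcongr
        rw [div_le_iff₀ (by linarith)]
        linarith

theorem sum_div_first_term_mem_Icc {β : ℕ → ℝ} {x : ℝ} {N K : ℕ} (hx : 0 < x) (hKN : K ≤ N)
    (hβ : ∀ r ∈ Ioc K N, 0 ≤ β r ∧ β r ≤ N.choose r) (hβK : (N.choose K : ℝ) ≤ 2 * β K)
    (hq : N * K / x ≤ 1 / 2) :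
    (∑ r ∈ Icc K N, (x ^ r)⁻¹ * β r * Nat.stirlingSecond r K) / ((x ^ K)⁻¹ * β K) ∈
      Set.Icc 1 (1 + 4 * (N * K / x)) := by
  set q := (N : ℝ) * K / x
  set D := (x ^ K)⁻¹ * β K with hD_def
  have hD : 0 < D := by
    have : (0 : ℝ) < N.choose K := mod_cast Nat.choose_pos hKN
    exact mul_pos (by positivity) (by linarith)
  have hterm : ∀ r ∈ Ioc K N, (x ^ r)⁻¹ * β r * Nat.stirlingSecond r K ≤ 2 * D * q ^ (r - K) := by
    intro r hr
    have hKr : K ≤ r := (mem_Ioc.1 hr).1.le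
    have hchoose : (N.choose r * Nat.stirlingSecond r K : ℝ) ≤ N.choose K * (N * K) ^ (r - K) :=
      mod_cast Nat.choose_mul_stirlingSecond_le hKr
    calc (x ^ r)⁻¹ * β r * Nat.stirlingSecond r K
        ≤ (x ^ r)⁻¹ * (N.choose r * Nat.stirlingSecond r K) := by
          rw [mul_assoc]; gcongr; exact (hβ r hr).2
      _ ≤ (x ^ r)⁻¹ * (N.choose K * (N * K) ^ (r - K)) := by gcongr
      _ = (x ^ K)⁻¹ * N.choose K * q ^ (r - K) := by
          rw [div_pow, ← Nat.add_sub_cancel' hKr, pow_add, Nat.add_sub_cancel_left]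
          field_simp
      _ ≤ (x ^ K)⁻¹ * (2 * β K) * q ^ (r - K) := by gcongr
      _ = 2 * D * q ^ (r - K) := by rw [hD_def]; ring
  have hrest_nonneg : 0 ≤ ∑ r ∈ Ioc K N, (x ^ r)⁻¹ * β r * Nat.stirlingSecond r K :=
    sum_nonneg fun r hr => by have := (hβ r hr).1; positivity
  have hrest : ∑ r ∈ Ioc K N, (x ^ r)⁻¹ * β r * Nat.stirlingSecond r K ≤ 4 * q * D :=
    calc _ ≤ ∑ r ∈ Ioc K N, 2 * D * q ^ (r - K) := sum_le_sum hterm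
      _ = 2 * D * ∑ r ∈ Ioc K N, q ^ (r - K) := (mul_sum ..).symm
      _ ≤ 2 * D * (2 * q) := by gcongr; exact sum_Ioc_pow_sub_le_two_mul (by positivity) hq K N
      _ = 4 * q * D := by ring
  rw [Icc_eq_cons_Ioc hKN, sum_cons, Nat.stirlingSecond_self, Nat.cast_one, mul_one, add_div,
    div_self hD.ne']
  constructor
  · linarith [div_nonneg hrest_nonneg hD.le]
  · linarith [(div_le_iff₀ hD).2 hrest]

theorem coeff_prod_C_one_sub_div_add_X_pow_mem_Icc (m K n r : ℕ) (hK : (K : ℝ) / n ≤ 1)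
    (hr : r ≤ (K + 1) * (m + 1)) :
    (∏ i ∈ range (K + 1), (C (1 - (i : ℝ) / n) + X) ^ (m + 1)).coeff r ∈
      Set.Icc ((((K + 1) * (m + 1)).choose r : ℝ) * (1 - K / n) ^ ((K + 1) * (m + 1) - r))
        (((K + 1) * (m + 1)).choose r) := by
  set s := range (K + 1) ×ˢ range (m + 1)
  have hs : #s = (K + 1) * (m + 1) := by simp [s]
  have hc : 0 ≤ 1 - (K : ℝ) / n := by linarith
  have ha : ∀ p ∈ s, 1 - (K : ℝ) / n ≤ 1 - (p.1 : ℝ) / n ∧ 1 - (p.1 : ℝ) / n ≤ 1 := by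
    intro p hp
    have hpK : (p.1 : ℝ) ≤ K := by
      exact_mod_cast Nat.lt_succ_iff.1 (mem_range.1 (mem_product.1 hp).1)
    exact ⟨by gcongr, by linarith [show 0 ≤ (p.1 : ℝ) / n by positivity]⟩
  rw [← hs] at hr ⊢
  rw [prod_C_add_X_pow_eq_prod_product]
  exact ⟨choose_mul_pow_le_coeff_prod_X_add_C s _ hc (fun p hp => (ha p hp).1) hr,
    (coeff_prod_X_add_C_le_choose_mul_pow s _ (fun p hp => hc.trans (ha p hp).1)
      (fun p hp => (ha p hp).2) hr).trans_eq (by rw [one_pow, mul_one])⟩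

noncomputable def sumOverFirstTerm (m k n : ℕ) : ℝ :=
  (∑ r ∈ Icc (k - 1) (k * (m + 1)),
      ((n : ℝ) ^ r)⁻¹ * (∏ i ∈ range k, (C (1 - (i : ℝ) / n) + X) ^ (m + 1)).coeff r *
        (stirling2 r (k - 1) : ℝ)) /
    (((n : ℝ) ^ (k - 1))⁻¹ *
      (∏ i ∈ range k, (C (1 - (i : ℝ) / n) + X) ^ (m + 1)).coeff (k - 1))

theorem sumOverFirstTerm_mem_Icc (m K n : ℕ) (hn : 0 < n)
    (hq : (((K + 1) * (m + 1) : ℕ) : ℝ) * K / n ≤ 1 / 2) :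
    sumOverFirstTerm m (K + 1) n ∈
      Set.Icc 1 (1 + 4 * ((((K + 1) * (m + 1) : ℕ) : ℝ) * K / n)) := by
  unfold sumOverFirstTerm
  rw [Nat.add_sub_cancel, stirling2_eq_stirlingSecond]
  set N := (K + 1) * (m + 1) with hN
  have hKN : K ≤ N := by rw [hN]; nlinarith
  have hK : (K : ℝ) / n ≤ 1 / 2 := by
    have : (1 : ℝ) ≤ N := Nat.one_le_cast.2 (Nat.mul_pos K.succ_pos m.succ_pos)
    calc (K : ℝ) / n ≤ N * K / n := by gcongr; nlinarith
      _ ≤ 1 / 2 := hq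
  have hc : 0 ≤ 1 - (K : ℝ) / n := by linarith
  have hbern : 1 / 2 ≤ (1 - (K : ℝ) / n) ^ (N - K) := by
    have hpow := one_add_mul_le_pow (a := -((K : ℝ) / n)) (by linarith) (N - K)
    have hNK : ((N - K : ℕ) : ℝ) * ((K : ℝ) / n) ≤ N * K / n := by
      rw [mul_div_assoc]; gcongr; exact_mod_cast Nat.sub_le N K
    rw [← sub_eq_add_neg] at hpow
    linarith
  have hβ (r : ℕ) (hr : r ≤ N) :=
    coeff_prod_C_one_sub_div_add_X_pow_mem_Icc m K n r (by linarith) hr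
  refine sum_div_first_term_mem_Icc (by positivity) hKN
    (fun r hr => ⟨le_trans (by positivity) (hβ r (mem_Ioc.1 hr).2).1, (hβ r (mem_Ioc.1 hr).2).2⟩)
    ?_ hq
  nlinarith [(hβ K hKN).1, (Nat.cast_nonneg (N.choose K) : (0 : ℝ) ≤ _)]

theorem sumOverFirstTerm_ceil_mem_Icc (m n : ℕ) {w : ℝ} (hw : 0 < w) (hlog : 1 ≤ Real.log n)
    (hsmall : (m + 1) * (w + 1) ^ 2 * (Real.log n ^ 2 / n) ≤ 1 / 2) :
    sumOverFirstTerm m ⌈w * Real.log n⌉₊ n ∈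
      Set.Icc 1 (1 + 4 * ((m + 1) * (w + 1) ^ 2 * (Real.log n ^ 2 / n))) := by
  have hn : 0 < n := Nat.pos_of_ne_zero (by rintro rfl; norm_num at hlog)
  obtain ⟨K, hK⟩ : ∃ K, ⌈w * Real.log n⌉₊ = K + 1 :=
    Nat.exists_eq_add_one.2 (Nat.ceil_pos.2 (by positivity))
  have hKlog : (K : ℝ) + 1 ≤ (w + 1) * Real.log n := by
    have := Nat.ceil_lt_add_one (by positivity : 0 ≤ w * Real.log n)
    rw [hK] at this; push_cast at this; nlinarith
  have hq : (((K + 1) * (m + 1) : ℕ) : ℝ) * K / n ≤ (m + 1) * (w + 1) ^ 2 * (Real.log n ^ 2 / n) :=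
    calc (((K + 1) * (m + 1) : ℕ) : ℝ) * K / n ≤ (m + 1) * ((K : ℝ) + 1) ^ 2 / n := by
          gcongr ?_ / _; push_cast; nlinarith
      _ ≤ (m + 1) * ((w + 1) * Real.log n) ^ 2 / n := by gcongr
      _ = (m + 1) * (w + 1) ^ 2 * (Real.log n ^ 2 / n) := by ring
  rw [hK]
  obtain ⟨h₁, h₂⟩ := sumOverFirstTerm_mem_Icc m K n hn (by linarith)
  exact ⟨h₁, by linarith⟩

theorem stmt10_general (m : ℕ) (w : ℝ) (hw : 0 < w) :
    Tendsto
      (fun n : ℕ =>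
        (∑ r ∈ Finset.Icc (⌈w * Real.log n⌉₊ - 1) (⌈w * Real.log n⌉₊ * (m + 1)),
            ((n : ℝ) ^ r)⁻¹ *
              (∏ i ∈ Finset.range ⌈w * Real.log n⌉₊,
                (Polynomial.C (1 - (i : ℝ) / n) + Polynomial.X) ^ (m + 1)).coeff r *
              (stirling2 r (⌈w * Real.log n⌉₊ - 1) : ℝ)) /
          (((n : ℝ) ^ (⌈w * Real.log n⌉₊ - 1))⁻¹ *
            (∏ i ∈ Finset.range ⌈w * Real.log n⌉₊,
              (Polynomial.C (1 - (i : ℝ) / n) + Polynomial.X) ^ (m + 1)).coeff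
                (⌈w * Real.log n⌉₊ - 1)))
      atTop (nhds 1) := by
  show Tendsto (fun n : ℕ => sumOverFirstTerm m ⌈w * Real.log n⌉₊ n) atTop (nhds 1)
  set ε : ℕ → ℝ := fun n => (m + 1) * (w + 1) ^ 2 * (Real.log n ^ 2 / n)
  have hε : Tendsto ε atTop (nhds 0) := by
    simpa [ε, Function.comp_def] using ((Real.tendsto_pow_log_div_mul_add_atTop 1 0 2
      one_ne_zero).comp tendsto_natCast_atTop_atTop).const_mul ((m + 1) * (w + 1) ^ 2)
  have hbounds : ∀ᶠ n : ℕ in atTop,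
      sumOverFirstTerm m ⌈w * Real.log n⌉₊ n ∈ Set.Icc 1 (1 + 4 * ε n) := by
    filter_upwards [(Real.tendsto_log_atTop.comp tendsto_natCast_atTop_atTop).eventually_ge_atTop 1,
      hε.eventually_le_const (show (0 : ℝ) < 1 / 2 by norm_num)] with n hlog hεn
    exact sumOverFirstTerm_ceil_mem_Icc m n hw hlog hεn
  exact tendsto_of_tendsto_of_tendsto_of_le_of_le' tendsto_const_nhds
    (by simpa using (hε.const_mul 4).const_add 1) (hbounds.mono fun _ h => h.1)
    (hbounds.mono fun _ h => h.2)

theorem stmt10 (m : ℕ) (hm : 1 ≤ m) (w : ℝ) (hw : 0 < w) :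
    Tendsto
      (fun n : ℕ =>
        (∑ r ∈ Finset.Icc (⌈w * Real.log n⌉₊ - 1) (⌈w * Real.log n⌉₊ * (m + 1)),
            ((n : ℝ) ^ r)⁻¹ *
              (∏ i ∈ Finset.range ⌈w * Real.log n⌉₊,
                (Polynomial.C (1 - (i : ℝ) / n) + Polynomial.X) ^ (m + 1)).coeff r *
              (stirling2 r (⌈w * Real.log n⌉₊ - 1) : ℝ)) /
          (((n : ℝ) ^ (⌈w * Real.log n⌉₊ - 1))⁻¹ *
            (∏ i ∈ Finset.range ⌈w * Real.log n⌉₊,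
              (Polynomial.C (1 - (i : ℝ) / n) + Polynomial.X) ^ (m + 1)).coeff
                (⌈w * Real.log n⌉₊ - 1)))
      atTop (nhds 1) :=
  stmt10_general m w hw
end
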